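/- In the extension construction, let u = u_1…u_m and v = v_1…v_m be degree-m monomials over X_0 with u − v ∈ I_0, where I_0 is the two-sided ideal of K⟨X_0⟩ generated by M_0'. Then for all non-negative integers k_1,…,k_{m−1} one has ũ − ṽ ∈ I, where ũ = u_1 x_1^{k_1} u_2 x_1^{k_2} … x_1^{k_{m−1}} u_m, ṽ = v_1 x_1^{k_1} v_2 x_1^{k_2} … x_1^{k_{m−1}} v_m, and I is the two-sided ideal of K⟨X⟩ generated by M'. -/

import Mathlib

noncomputable section

/-- The monomial in the free algebra `K⟨X⟩ = MonoidAlgebra K (FreeMonoid X)`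
corresponding to a word `w`. -/
def mOfW (K : Type*) [Field K] {X : Type*} (w : FreeMonoid X) :
    MonoidAlgebra K (FreeMonoid X) :=
  MonoidAlgebra.single w 1

/-- The degree-`m` monomial `u_1 u_2 ⋯ u_m`. -/
def mOf (K : Type*) [Field K] {X : Type*} {m : ℕ} (u : Fin m → X) :
    MonoidAlgebra K (FreeMonoid X) :=
  mOfW K (FreeMonoid.ofList (List.ofFn u))

/-- The degree-2 monomial `ab`. -/
def m2 (K : Type*) [Field K] {X : Type*} (a b : X) :
    MonoidAlgebra K (FreeMonoid X) :=
  mOfW K (FreeMonoid.of a * FreeMonoid.of b)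

/-- The support of an element of `K⟨X⟩`: the set of words occurring with
nonzero coefficient. -/
def suppOf {K X : Type*} [Field K] (f : MonoidAlgebra K (FreeMonoid X)) :
    Finset (FreeMonoid X) :=
  Finsupp.support f.coeff

/-- The two-sided ideal generated by a set `s` in a `K`-algebra, viewed as the
`K`-submodule spanned by all products `p * a * q` with `a ∈ s`. -/
def idealSpan (K : Type*) [Field K] {A : Type*} [Ring A] [Algebra K A]
    (s : Set A) : Submodule K A :=
  Submodule.span K {x | ∃ p q : A, ∃ a ∈ s, x = p * a * q}

/-- `M` is a Quasierhöhungssystem (QHS) on the totally ordered set `X`. -/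
def IsQHS (K : Type*) [Field K] {X : Type*} [LinearOrder X]
    (M : Set (MonoidAlgebra K (FreeMonoid X))) : Prop :=
  M.PairwiseDisjoint (fun g => (suppOf g : Set (FreeMonoid X))) ∧
  (⋃ g ∈ M, (suppOf g : Set (FreeMonoid X))) =
    {w | ∃ a b : X, b ≤ a ∧ w = FreeMonoid.of a * FreeMonoid.of b} ∧
  ∀ g ∈ M,
    (∃ a b : X, b ≤ a ∧ g = m2 K a b) ∨
    (∃ a b c d : X, d ≤ c ∧ c < b ∧ b ≤ a ∧ g = m2 K a b - m2 K c d) ∨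
    (∃ a b d : X, d < b ∧ b < a ∧ g = m2 K a b - m2 K b d)

/-- The maximal element `b = max X`. -/
def topEl (X : Type*) [Fintype X] [LinearOrder X] [Nonempty X] : X :=
  Finset.univ.max' Finset.univ_nonempty

/-- The minimal element `a = min X`. -/
def botEl (X : Type*) [Fintype X] [LinearOrder X] [Nonempty X] : X :=
  Finset.univ.min' Finset.univ_nonempty

/-- The ideal `I_M`, generated by `M' = M \ {ba}` where `a = min X`, `b = max X`. -/
def qhsIdeal (K : Type*) [Field K] {X : Type*} [Fintype X] [LinearOrder X] [Nonempty X]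
    (M : Set (MonoidAlgebra K (FreeMonoid X))) :
    Submodule K (MonoidAlgebra K (FreeMonoid X)) :=
  idealSpan K (M \ {m2 K (topEl X) (botEl X)})

/-- The right-to-left lexicographical strict order on degree-`m` monomials. -/
def rlLt {X : Type*} [LinearOrder X] {m : ℕ} (u v : Fin m → X) : Prop :=
  ∃ j : Fin m, u j < v j ∧ ∀ l : Fin m, j < l → u l = v l

/-- The monomial `u` is minimal with respect to the QHS `M`. -/
def MinimalMon (K : Type*) [Field K] {X : Type*} [Fintype X] [LinearOrder X] [Nonempty X]
    (M : Set (MonoidAlgebra K (FreeMonoid X))) {m : ℕ} (u : Fin m → X) : Prop :=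
  mOf K u ∉ qhsIdeal K M ∧
    ∀ v : Fin m → X, mOf K u - mOf K v ∈ qhsIdeal K M → u = v ∨ rlLt u v

/-- The monomial `u` is tame with respect to the QHS `M`. -/
def TameMon (K : Type*) [Field K] {X : Type*} [Fintype X] [LinearOrder X] [Nonempty X]
    (M : Set (MonoidAlgebra K (FreeMonoid X))) {m : ℕ} (u : Fin m → X) : Prop :=
  MinimalMon K M u ∧ ∃ v : Fin m → X, ∃ j : Fin m,
    mOf K u - mOf K v ∈ qhsIdeal K M ∧ v j = topEl X ∧ ∀ l : Fin m, j < l → v l = u l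

/-- The monomial `u` is singular with respect to the QHS `M`: minimal and not tame. -/
def SingularMon (K : Type*) [Field K] {X : Type*} [Fintype X] [LinearOrder X] [Nonempty X]
    (M : Set (MonoidAlgebra K (FreeMonoid X))) {m : ℕ} (u : Fin m → X) : Prop :=
  MinimalMon K M u ∧ ¬ TameMon K M u

/-- The QHS `M` is regular: for some positive `m` there are no singular monomials
of degree `m`. -/
def RegularQHS (K : Type*) [Field K] {X : Type*} [Fintype X] [LinearOrder X] [Nonempty X]
    (M : Set (MonoidAlgebra K (FreeMonoid X))) : Prop :=
  ∃ m : ℕ, 0 < m ∧ ∀ u : Fin m → X, ¬ SingularMon K M u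

/-- `e ∈ X` is pure with respect to `M`: whenever `ab - ce ∈ M`,
one has `a ≥ b > c ≥ e`. -/
def PureEl (K : Type*) [Field K] {X : Type*} [LinearOrder X]
    (M : Set (MonoidAlgebra K (FreeMonoid X))) (e : X) : Prop :=
  ∀ a b c : X, m2 K a b - m2 K c e ∈ M → e ≤ c ∧ c < b ∧ b ≤ a

/-- The set `X₀ = {x_3, …, x_{n-2}}` (0-based: indices `2, …, n-3` of `Fin n`). -/
abbrev X0 (n : ℕ) := {x : Fin n // 2 ≤ x.val ∧ x.val + 3 ≤ n}

instance factNeZero (n : ℕ) [Fact (5 ≤ n)] : NeZero n :=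
  ⟨by have h := Fact.out (p := 5 ≤ n); omega⟩

instance factNonemptyX0 (n : ℕ) [Fact (5 ≤ n)] : Nonempty (X0 n) :=
  ⟨⟨⟨2, by have h := Fact.out (p := 5 ≤ n); omega⟩,
    ⟨le_refl 2, show 2 + 3 ≤ n by have h := Fact.out (p := 5 ≤ n); omega⟩⟩⟩

open Fin.NatCast in
/-- The generator `x_j` of the paper (1-based index `j`) as an element of `Fin n`. -/
def px (n : ℕ) [NeZero n] (j : ℕ) : Fin n := (↑(j - 1) : Fin n)

/-- The embedding `K⟨X₀⟩ → K⟨X⟩` induced by the inclusion `X₀ ⊆ X`. -/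
def emb (K : Type*) [Field K] (n : ℕ)
    (f : MonoidAlgebra K (FreeMonoid (X0 n))) : MonoidAlgebra K (FreeMonoid (Fin n)) :=
  MonoidAlgebra.ofCoeff (Finsupp.mapDomain (FreeMonoid.map (fun x : X0 n => (x : Fin n))) f.coeff)

/-- The set `M'` of the extension construction. -/
def Mext' (K : Type*) [Field K] (n : ℕ) [Fact (5 ≤ n)]
    (M0 : Set (MonoidAlgebra K (FreeMonoid (X0 n)))) :
    Set (MonoidAlgebra K (FreeMonoid (Fin n))) :=
  (emb K n '' (M0 \ {m2 K (topEl (X0 n)) (botEl (X0 n))})) ∪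
  {g | ∃ j : ℕ, 2 ≤ j ∧ j ≤ n - 2 ∧
      g = m2 K (px n n) (px n j) - m2 K (px n j) (px n 1)} ∪
  {g | ∃ j : ℕ, 2 ≤ j ∧ j ≤ n - 3 ∧
      g = m2 K (px n (n-1)) (px n (j+1)) - m2 K (px n j) (px n 2)} ∪
  {m2 K (px n n) (px n n) - m2 K (px n (n-1)) (px n 1),
   m2 K (px n n) (px n (n-1)) - m2 K (px n (n-2)) (px n 2),
   m2 K (px n (n-1)) (px n (n-1)) - m2 K (px n (n-2)) (px n 3),
   m2 K (px n (n-1)) (px n 2) - m2 K (px n 1) (px n 1)}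

/-- The set `M = M' ∪ {x_n x_1}` of the extension construction. -/
def Mext (K : Type*) [Field K] (n : ℕ) [Fact (5 ≤ n)]
    (M0 : Set (MonoidAlgebra K (FreeMonoid (X0 n)))) :
    Set (MonoidAlgebra K (FreeMonoid (Fin n))) :=
  Mext' K n M0 ∪ {m2 K (px n n) (px n 1)}

/-- The interleaved word `u_1 x_1^{ks 0} u_2 x_1^{ks 1} ⋯ x_1^{ks (m-2)} u_m`. -/
def ileave (n : ℕ) [NeZero n] {m : ℕ} (u : Fin m → Fin n) (ks : ℕ → ℕ) :
    FreeMonoid (Fin n) :=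
  (List.ofFn fun i : Fin m =>
    if i.val + 1 = m then FreeMonoid.of (u i)
    else FreeMonoid.of (u i) * (FreeMonoid.of (px n 1)) ^ ks i.val).prod

/-!
With the exponents `ks` fixed, interleaving powers of `x₁` extends linearly (but not
multiplicatively) to a map `K⟨X₀⟩ → K⟨X⟩`, so it suffices that it sends every `w₁ g w₂` with
`g ∈ M₀'` into `I`. Interleaving turns the degree-2 monomials `a b` of `g` into `a x₁^k b`, with `k`
depending only on the position of `a` in `w₁ a b w₂`. Since `x_n a - a x₁ ∈ M'` for every
`a ∈ X₀`, we have `a x₁^k ≡ x_n^k a` modulo `I`, so the image of `w₁ g w₂` is congruent to some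
`p x_n^k g t`, which lies in `I`.
-/

open MonoidAlgebra

section IdealSpan

variable {K A : Type*} [Field K] [Ring A] [Algebra K A] {s : Set A}

theorem mul_mul_mem_idealSpan_of_mem (p q : A) {g : A} (hg : g ∈ s) :
    p * g * q ∈ idealSpan K s :=
  Submodule.subset_span ⟨p, q, g, hg, rfl⟩

theorem mul_mul_mem_idealSpan (p q : A) {x : A} (hx : x ∈ idealSpan K s) :
    p * x * q ∈ idealSpan K s := by
  induction hx using Submodule.span_induction with
  | mem y hy =>
    obtain ⟨p', q', g, hg, rfl⟩ := hy
    simpa [mul_assoc] using mul_mul_mem_idealSpan_of_mem (K := K) (p * p') (q' * q) hg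
  | zero => simp
  | add y z _ _ hy hz => simpa [mul_add, add_mul] using add_mem hy hz
  | smul c y _ hy => simpa using Submodule.smul_mem _ c hy

theorem mul_pow_sub_pow_mul_mem_idealSpan {a x y : A} (h : a * x - y * a ∈ idealSpan K s)
    (k : ℕ) : a * x ^ k - y ^ k * a ∈ idealSpan K s := by
  induction k with
  | zero => simp
  | succ k ih =>
    have key : a * x ^ (k + 1) - y ^ (k + 1) * a =
        1 * (a * x ^ k - y ^ k * a) * x + y ^ k * (a * x - y * a) * 1 := by
      rw [pow_succ, pow_succ]; noncomm_ring
    rw [key]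
    exact add_mem (mul_mul_mem_idealSpan _ _ ih) (mul_mul_mem_idealSpan _ _ h)

theorem idealSpan_le_span_of_mul_mul {G : Type*} [Monoid G] (s : Set (MonoidAlgebra K G)) :
    idealSpan K s ≤ Submodule.span K {x | ∃ v w : G, ∃ g ∈ s, x = of K G v * g * of K G w} := by
  refine Submodule.span_le.2 ?_
  rintro _ ⟨p, q, g, hg, rfl⟩
  induction p using MonoidAlgebra.induction_linear with
  | zero => simp
  | add p p' hp hp' => simpa [add_mul] using add_mem hp hp'
  | single v c =>
    induction q using MonoidAlgebra.induction_linear with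
    | zero => simp
    | add q q' hq hq' => simpa [mul_add] using add_mem hq hq'
    | single w d =>
      have h : single v c * g * single w d = (c * d) • (of K G v * g * of K G w) := by
        have hsingle (x : G) (r : K) : single x r = r • of K G x := by
          rw [of_apply, smul_single', mul_one]
        rw [hsingle v, hsingle w, smul_mul_assoc, smul_mul_assoc, mul_smul_comm, smul_smul]
      rw [h]
      exact Submodule.smul_mem _ _ (Submodule.subset_span ⟨v, w, g, hg, rfl⟩)

end IdealSpan

def padWord {α : Type*} (e : α) (ks : ℕ → ℕ) (l : List α) : FreeMonoid α :=
  (l.mapIdx fun i a => FreeMonoid.of a * FreeMonoid.of e ^ ks i).prod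

section PadWord

variable {α : Type*} (e : α) (ks : ℕ → ℕ)

theorem padWord_append (l₁ l₂ : List α) :
    padWord e ks (l₁ ++ l₂) = padWord e ks l₁ * padWord e (fun i => ks (i + l₁.length)) l₂ := by
  simp [padWord, List.mapIdx_append]

theorem padWord_cons (a : α) (l : List α) :
    padWord e ks (a :: l) =
      FreeMonoid.of a * FreeMonoid.of e ^ ks 0 * padWord e (fun i => ks (i + 1)) l := by
  simp [padWord, List.mapIdx_cons, mul_assoc]

theorem padWord_append_cons_cons (l₁ l₂ : List α) (a b : α) :
    padWord e ks (l₁ ++ a :: b :: l₂) =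
      padWord e ks l₁ * (FreeMonoid.of a * FreeMonoid.of e ^ ks l₁.length * FreeMonoid.of b) *
        (FreeMonoid.of e ^ ks (l₁.length + 1) *
          padWord e (fun i => ks (i + 1 + 1 + l₁.length)) l₂) := by
  simp only [padWord_append, padWord_cons, zero_add, mul_assoc]
  ac_rfl

end PadWord

/-- `padWord` also pads the last letter, which `ileave` does not; setting the last exponent to
`0` makes the two agree. -/
theorem ileave_eq_padWord (n : ℕ) [NeZero n] {m : ℕ} (u : Fin m → Fin n) (ks : ℕ → ℕ) :
    ileave n u ks = padWord (px n 1) (Function.update ks (m - 1) 0) (List.ofFn u) := by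
  rw [ileave, padWord, List.mapIdx_eq_ofFn]
  congr 1
  refine List.ext_getElem (by simp) fun i hi _ => ?_
  rw [List.length_ofFn] at hi
  by_cases hlast : i + 1 = m
  · obtain rfl : i = m - 1 := by omega
    simp [hlast]
  · simp [hlast, show i ≠ m - 1 by omega]

section Interleave

variable {K : Type*} [Field K] {n : ℕ} [NeZero n]

theorem px_val_add_one (a : Fin n) : px n (a.val + 1) = a := by
  simp only [px, Nat.add_sub_cancel]
  exact Fin.cast_val_eq_self a

variable (K n) in
def interleaveMap (ks : ℕ → ℕ) :
    MonoidAlgebra K (FreeMonoid (X0 n)) →ₗ[K] MonoidAlgebra K (FreeMonoid (Fin n)) :=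
  mapDomainLinearMap K K fun w => padWord (px n 1) ks (w.toList.map Subtype.val)

theorem interleaveMap_mOf {m : ℕ} (u : Fin m → X0 n) (ks : ℕ → ℕ) :
    interleaveMap K n (Function.update ks (m - 1) 0) (mOf K u) =
      mOfW K (ileave n (fun i => (u i : Fin n)) ks) := by
  rw [mOf, mOfW, mOfW, interleaveMap, mapDomainLinearMap_single, ileave_eq_padWord,
    FreeMonoid.toList_ofList, List.map_ofFn]
  rfl

end Interleave

section Extension

variable {K : Type*} [Field K] {n : ℕ} [Fact (5 ≤ n)]
  (M0 : Set (MonoidAlgebra K (FreeMonoid (X0 n))))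

theorem of_mul_pow_sub_pow_mul_of_mem_idealSpan (a : X0 n) (k : ℕ) :
    of K _ (FreeMonoid.of (a : Fin n)) * of K _ (FreeMonoid.of (px n 1)) ^ k -
      of K _ (FreeMonoid.of (px n n)) ^ k * of K _ (FreeMonoid.of (a : Fin n)) ∈
      idealSpan K (Mext' K n M0) := by
  refine mul_pow_sub_pow_mul_mem_idealSpan ?_ k
  have hn : 5 ≤ n := Fact.out
  have hgen : m2 K (px n n) (a : Fin n) - m2 K (a : Fin n) (px n 1) ∈ Mext' K n M0 := by
    refine Or.inl (Or.inl (Or.inr ⟨a.val.val + 1, by omega, by omega, ?_⟩))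
    rw [px_val_add_one]
  have h := neg_mem (mul_mul_mem_idealSpan_of_mem (K := K) 1 1 hgen)
  rw [one_mul, mul_one, neg_sub] at h
  simpa [m2, mOfW, of_apply] using h

theorem exists_interleaveMap_mul_m2_mul_sub_mem (ks : ℕ → ℕ) (w₁ w₂ : FreeMonoid (X0 n)) :
    ∃ p t, ∀ a b : X0 n, interleaveMap K n ks (mOfW K w₁ * m2 K a b * mOfW K w₂) -
      p * emb K n (m2 K a b) * t ∈ idealSpan K (Mext' K n M0) := by
  let x := of K (FreeMonoid (Fin n))
  let l₁ := w₁.toList.map Subtype.val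
  let k := ks l₁.length
  let P := x (padWord (px n 1) ks l₁)
  let T := x (FreeMonoid.of (px n 1) ^ ks (l₁.length + 1) *
    padWord (px n 1) (fun i => ks (i + 1 + 1 + l₁.length)) (w₂.toList.map Subtype.val))
  refine ⟨P * x (FreeMonoid.of (px n n)) ^ k, T, fun a b => ?_⟩
  have hword : interleaveMap K n ks (mOfW K w₁ * m2 K a b * mOfW K w₂) =
      P * (x (FreeMonoid.of ↑a) * x (FreeMonoid.of (px n 1)) ^ k * x (FreeMonoid.of ↑b)) * T := by
    have hmono : mOfW K w₁ * m2 K a b * mOfW K w₂ = single (w₁ * (.of a * .of b) * w₂) 1 := by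
      simp only [m2, mOfW, single_mul_single, mul_one]
    rw [hmono, interleaveMap, mapDomainLinearMap_single]
    simp only [FreeMonoid.toList_mul, FreeMonoid.toList_of, List.map_append, List.map_cons,
      List.append_assoc, List.cons_append, List.nil_append]
    rw [padWord_append_cons_cons, ← of_apply, map_mul, map_mul, map_mul, map_mul, map_pow]
  have hemb : emb K n (m2 K a b) = x (FreeMonoid.of ↑a) * x (FreeMonoid.of ↑b) := by
    change mapDomain (FreeMonoid.map Subtype.val) (single _ 1) = _
    rw [mapDomain_single, map_mul, FreeMonoid.map_of, FreeMonoid.map_of, ← map_mul]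
    rfl
  rw [hword, hemb]
  have h := mul_mul_mem_idealSpan P (x (FreeMonoid.of ↑b) * T)
    (of_mul_pow_sub_pow_mul_of_mem_idealSpan M0 a k)
  simpa only [mul_sub, sub_mul, mul_assoc] using h

variable {M0} in
theorem interleaveMap_mul_mul_mem (ks : ℕ → ℕ) (hM0 : IsQHS K M0)
    {g : MonoidAlgebra K (FreeMonoid (X0 n))}
    (hg : g ∈ M0 \ {m2 K (topEl (X0 n)) (botEl (X0 n))}) (w₁ w₂ : FreeMonoid (X0 n)) :
    interleaveMap K n ks (mOfW K w₁ * g * mOfW K w₂) ∈ idealSpan K (Mext' K n M0) := by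
  obtain ⟨p, t, hpt⟩ := exists_interleaveMap_mul_m2_mul_sub_mem M0 ks w₁ w₂
  have hgen : p * emb K n g * t ∈ idealSpan K (Mext' K n M0) :=
    mul_mul_mem_idealSpan_of_mem p t (Or.inl (Or.inl (Or.inl ⟨g, hg, rfl⟩)))
  have hshape : (∃ a b, g = m2 K a b) ∨ ∃ a b c d, g = m2 K a b - m2 K c d := by
    rcases hM0.2.2 g hg.1 with ⟨a, b, -, rfl⟩ | ⟨a, b, c, d, -, -, -, rfl⟩ | ⟨a, b, d, -, -, rfl⟩
    exacts [.inl ⟨a, b, rfl⟩, .inr ⟨a, b, c, d, rfl⟩, .inr ⟨a, b, b, d, rfl⟩]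
  rcases hshape with ⟨a, b, rfl⟩ | ⟨a, b, c, d, rfl⟩
  · simpa using add_mem (hpt a b) hgen
  · have hemb : emb K n (m2 K a b - m2 K c d) = emb K n (m2 K a b) - emb K n (m2 K c d) :=
      map_sub (mapDomainRingHom K (FreeMonoid.map Subtype.val)) _ _
    have h := add_mem (sub_mem (hpt a b) (hpt c d)) hgen
    rw [hemb, mul_sub, sub_mul] at h
    rw [mul_sub, sub_mul, map_sub]
    convert h using 1
    abel

variable {M0} in
theorem interleaveMap_mem_of_mem (ks : ℕ → ℕ) (hM0 : IsQHS K M0)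
    {x : MonoidAlgebra K (FreeMonoid (X0 n))}
    (hx : x ∈ idealSpan K (M0 \ {m2 K (topEl (X0 n)) (botEl (X0 n))})) :
    interleaveMap K n ks x ∈ idealSpan K (Mext' K n M0) := by
  refine Submodule.span_le (p := (idealSpan K (Mext' K n M0)).comap (interleaveMap K n ks)) |>.2
    ?_ (idealSpan_le_span_of_mul_mul _ hx)
  rintro _ ⟨w₁, w₂, g, hg, rfl⟩
  exact interleaveMap_mul_mul_mem ks hM0 hg w₁ w₂

end Extension

/-- **Corollary (m3).** In the extension construction, if `u = v (mod I₀)` for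
degree-`m` monomials over `X₀`, then the interleaved monomials
`u_1 x_1^{k_1} ⋯ x_1^{k_{m-1}} u_m` and `v_1 x_1^{k_1} ⋯ x_1^{k_{m-1}} v_m`
are congruent modulo `I`. -/
theorem ext_interleaved_congruence
    (K : Type*) [Field K] (n : ℕ) [Fact (5 ≤ n)]
    (M0 : Set (MonoidAlgebra K (FreeMonoid (X0 n)))) (hM0 : IsQHS K M0)
    (m : ℕ) (u v : Fin m → X0 n)
    (huv : mOf K u - mOf K v ∈
      idealSpan K (M0 \ {m2 K (topEl (X0 n)) (botEl (X0 n))}))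
    (ks : ℕ → ℕ) :
    mOfW K (ileave n (fun i => (u i : Fin n)) ks) -
      mOfW K (ileave n (fun i => (v i : Fin n)) ks) ∈
      idealSpan K (Mext' K n M0) := by
  have h := interleaveMap_mem_of_mem (Function.update ks (m - 1) 0) hM0 huv
  rwa [map_sub, interleaveMap_mOf, interleaveMap_mOf] at h
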